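/- Let 0 < q < 1, let ν be a positive integer, let z > 0 be real and let s ∈ ℂ with Re(s) > ν + 1. Then both of the following series converge absolutely and Σ_{n=0}^∞ q^{(n+z)(s−ν)}·[n+z]_q^{−s} = (1−q)^s·Σ_{l=0}^∞ ((s)_l/l!)·q^{z(s−ν+l)}/(1 − q^{s−ν+l}), where (s)_l := s(s+1)⋯(s+l−1) is the Pochhammer symbol ((s)_0 := 1). -/

import Mathlib

open Complex

/-- `q^w := exp(w · log q)` with the real logarithm of `q`. -/
noncomputable def qpow (q : ℝ) (w : ℂ) : ℂ := Complex.exp (w * Real.log q)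

/-! Expanding `(1 - q^(n+z))^(-s)` by the binomial series turns the left-hand side into the double
series `∑_{n,l} (s)_l / l! · q^((n+z)(s-ν+l))`. It converges absolutely, since its terms are bounded
by `|q^((n+z)(s-ν))| · |(s)_l / l!| · (q^z)^l`, a product of two summable sequences. Summed over `n`
first, each column is a geometric series, which gives the right-hand side. -/

open scoped Nat

lemma summable_norm_tsum_of_summable_norm {α β E : Type*} [NormedAddCommGroup E]
    {f : α × β → E} (hf : Summable fun p => ‖f p‖) : Summable fun a => ‖∑' b, f (a, b)‖ :=
  hf.prod.of_nonneg_of_le (fun _ => norm_nonneg _)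
    fun a => norm_tsum_le_tsum_norm (hf.prod_factor a)

lemma qpow_add (q : ℝ) (a b : ℂ) : qpow q (a + b) = qpow q a * qpow q b := by
  rw [qpow, qpow, qpow, ← Complex.exp_add, add_mul]

lemma qpow_natCast_mul (q : ℝ) (n : ℕ) (w : ℂ) : qpow q (n * w) = qpow q w ^ n := by
  rw [qpow, qpow, ← Complex.exp_nat_mul, mul_assoc]

lemma norm_qpow {q : ℝ} (hq : 0 < q) (w : ℂ) : ‖qpow q w‖ = q ^ w.re := by
  rw [qpow, Complex.norm_exp, Real.rpow_def_of_pos hq, mul_comm]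
  simp

lemma qpow_ofReal {q : ℝ} (hq : 0 < q) (x : ℝ) : qpow q x = ((q ^ x : ℝ) : ℂ) := by
  rw [qpow, Real.rpow_def_of_pos hq, Complex.ofReal_exp, mul_comm]
  push_cast
  ring_nf

lemma norm_qpow_lt_one {q : ℝ} (hq0 : 0 < q) (hq1 : q < 1) {w : ℂ} (hw : 0 < w.re) :
    ‖qpow q w‖ < 1 := by
  rw [norm_qpow hq0]
  exact Real.rpow_lt_one hq0.le hq1 hw

lemma qpow_add_mul (q : ℝ) (n : ℕ) (z w : ℂ) :
    qpow q ((n + z) * w) = qpow q (z * w) * qpow q w ^ n := by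
  rw [← qpow_natCast_mul, ← qpow_add]
  ring_nf

lemma hasSum_qpow_add_mul {q : ℝ} (hq0 : 0 < q) (hq1 : q < 1) {w : ℂ} (hw : 0 < w.re) (z : ℂ) :
    HasSum (fun n : ℕ => qpow q ((n + z) * w)) (qpow q (z * w) / (1 - qpow q w)) := by
  simpa only [qpow_add_mul, div_eq_mul_inv] using
    (hasSum_geometric_of_norm_lt_one (norm_qpow_lt_one hq0 hq1 hw)).mul_left (qpow q (z * w))

lemma summable_norm_qpow_add_mul {q : ℝ} (hq0 : 0 < q) (hq1 : q < 1) {w : ℂ} (hw : 0 < w.re)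
    (z : ℂ) : Summable (fun n : ℕ => ‖qpow q ((n + z) * w)‖) := by
  simpa only [qpow_add_mul, norm_mul, norm_pow] using
    (summable_geometric_of_lt_one (norm_nonneg _) (norm_qpow_lt_one hq0 hq1 hw)).mul_left
      ‖qpow q (z * w)‖

lemma ascPochhammer_eval_div_factorial (s : ℂ) (l : ℕ) :
    (ascPochhammer ℂ l).eval s / (l ! : ℂ) = Ring.choose (s + l - 1) l := by
  rw [← Ring.multichoose_eq, div_eq_iff (Nat.cast_ne_zero.2 l.factorial_ne_zero),
    ← Polynomial.ascPochhammer_smeval_eq_eval, ← Ring.factorial_nsmul_multichoose_eq_ascPochhammer,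
    nsmul_eq_mul, mul_comm]

lemma hasSum_ascPochhammer_div_factorial_mul_pow (s : ℂ) {x : ℂ} (hx : ‖x‖ < 1) :
    HasSum (fun l => (ascPochhammer ℂ l).eval s / (l ! : ℂ) * x ^ l) (1 / (1 - x) ^ s) := by
  have := (one_div_one_sub_cpow_hasFPowerSeriesOnBall_zero s).hasSum
    (y := x) (by simpa [← ofReal_norm] using hx)
  simpa [FormalMultilinearSeries.ofScalars_apply_eq, ascPochhammer_eval_div_factorial, mul_comm]
    using this

lemma summable_norm_ascPochhammer_div_factorial_mul_pow (s : ℂ) {r : ℝ} (hr0 : 0 ≤ r)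
    (hr1 : r < 1) : Summable (fun l => ‖(ascPochhammer ℂ l).eval s / (l ! : ℂ)‖ * r ^ l) := by
  have hf := one_div_one_sub_cpow_hasFPowerSeriesOnBall_zero s
  have := FormalMultilinearSeries.summable_norm_apply _ (x := (r : ℂ))
    (Metric.eball_subset_eball hf.r_le (by simpa [← ofReal_norm, abs_of_nonneg hr0] using hr1))
  simpa [FormalMultilinearSeries.ofScalars_apply_eq, ascPochhammer_eval_div_factorial,
    abs_of_nonneg hr0, mul_comm] using this

lemma one_div_ofReal_cpow {y : ℝ} (hy : 0 < y) (s : ℂ) :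
    1 / (y : ℂ) ^ s = exp (-s * Real.log y) := by
  rw [cpow_def_of_ne_zero (ofReal_ne_zero.2 hy.ne'), ← ofReal_log hy.le, one_div, ← exp_neg]
  ring_nf

lemma exp_neg_mul_log_div {x y : ℝ} (hx : 0 < x) (hy : 0 < y) (s : ℂ) :
    exp (-s * Real.log (x / y)) = exp (s * Real.log y) * exp (-s * Real.log x) := by
  rw [Real.log_div hx.ne' hy.ne', ← exp_add]
  push_cast
  ring_nf

lemma qpow_mul_add_natCast (q : ℝ) (t a : ℂ) (l : ℕ) :
    qpow q (t * (a + l)) = qpow q (t * a) * qpow q t ^ l := by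
  rw [← qpow_natCast_mul, ← qpow_add]
  ring_nf

lemma hasSum_ascPochhammer_mul_qpow {q : ℝ} (hq0 : 0 < q) (hq1 : q < 1) {t : ℝ} (ht : 0 < t)
    (s a : ℂ) :
    HasSum (fun l : ℕ => (ascPochhammer ℂ l).eval s / (l ! : ℂ) * qpow q (t * (a + l)))
      (qpow q (t * a) * exp (-s * Real.log (1 - q ^ t))) := by
  have hqt : q ^ t < 1 := Real.rpow_lt_one hq0.le hq1 ht
  have hx : ‖qpow q t‖ < 1 := by simpa [norm_qpow hq0] using hqt
  have := (hasSum_ascPochhammer_div_factorial_mul_pow s hx).mul_left (qpow q (t * a))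
  rw [qpow_ofReal hq0, ← ofReal_one, ← ofReal_sub, ofReal_one,
    one_div_ofReal_cpow (by linarith)] at this
  refine this.congr_fun fun l => ?_
  rw [qpow_mul_add_natCast, qpow_ofReal hq0]
  ring

lemma summable_norm_ascPochhammer_mul_qpow {q : ℝ} (hq0 : 0 < q) (hq1 : q < 1) {z : ℝ}
    (hz : 0 < z) (s : ℂ) {a : ℂ} (ha : 0 < a.re) :
    Summable (fun p : ℕ × ℕ =>
      ‖(ascPochhammer ℂ p.2).eval s / (p.2 ! : ℂ) * qpow q ((p.1 + z) * (a + p.2))‖) := by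
  refine Summable.of_nonneg_of_le (fun _ => norm_nonneg _) (fun ⟨n, l⟩ => ?_)
    ((summable_norm_qpow_add_mul hq0 hq1 ha z).mul_of_nonneg
      (summable_norm_ascPochhammer_div_factorial_mul_pow s (Real.rpow_nonneg hq0.le z)
        (Real.rpow_lt_one hq0.le hq1 hz)) (fun _ => norm_nonneg _) (fun _ => by positivity))
  have hqnz : ‖qpow q (n + z)‖ ≤ q ^ z := by
    rw [norm_qpow hq0]
    exact Real.rpow_le_rpow_of_exponent_ge hq0 hq1.le (by simp)
  rw [qpow_mul_add_natCast, norm_mul, norm_mul, norm_pow, mul_left_comm]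
  gcongr

theorem stmt15_general (q : ℝ) (hq0 : 0 < q) (hq1 : q < 1) (ν : ℕ)
    (z : ℝ) (hz : 0 < z) (s : ℂ) (hs : (ν : ℝ) + 1 < s.re) :
    Summable (fun n : ℕ => ‖qpow q (((n : ℂ) + z) * (s - (ν : ℂ))) *
      Complex.exp (-s * Real.log ((1 - q ^ ((n : ℝ) + z)) / (1 - q)))‖) ∧
    Summable (fun l : ℕ => ‖((ascPochhammer ℂ l).eval s / (Nat.factorial l : ℂ)) *
      qpow q ((z : ℂ) * (s - (ν : ℂ) + (l : ℂ))) / (1 - qpow q (s - (ν : ℂ) + (l : ℂ)))‖) ∧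
    (∑' n : ℕ, qpow q (((n : ℂ) + z) * (s - (ν : ℂ))) *
        Complex.exp (-s * Real.log ((1 - q ^ ((n : ℝ) + z)) / (1 - q)))) =
      Complex.exp (s * Real.log (1 - q)) *
        ∑' l : ℕ, ((ascPochhammer ℂ l).eval s / (Nat.factorial l : ℂ)) *
          qpow q ((z : ℂ) * (s - (ν : ℂ) + (l : ℂ))) /
            (1 - qpow q (s - (ν : ℂ) + (l : ℂ))) := by
  set a := s - (ν : ℂ)
  have ha : ∀ l : ℕ, 0 < (a + l).re := fun l => by
    simp only [a, add_re, sub_re, natCast_re]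
    linarith [l.cast_nonneg (α := ℝ)]
  set F : ℕ × ℕ → ℂ := fun p =>
    (ascPochhammer ℂ p.2).eval s / (p.2 ! : ℂ) * qpow q ((p.1 + z) * (a + p.2))
  have hF : Summable fun p => ‖F p‖ :=
    summable_norm_ascPochhammer_mul_qpow hq0 hq1 hz s (by simpa using ha 0)
  have hrow : ∀ n : ℕ,
      qpow q ((n + z) * a) * exp (-s * Real.log ((1 - q ^ ((n : ℝ) + z)) / (1 - q)))
        = exp (s * Real.log (1 - q)) * ∑' l, F (n, l) := fun n => by
    have hnz : (0 : ℝ) < n + z := by positivity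
    have hbin := hasSum_ascPochhammer_mul_qpow hq0 hq1 hnz s a
    push_cast at hbin
    rw [hbin.tsum_eq, exp_neg_mul_log_div (by linarith [Real.rpow_lt_one hq0.le hq1 hnz])
      (by linarith)]
    ring
  have hcol : ∀ l : ℕ, ∑' n, F (n, l) = (ascPochhammer ℂ l).eval s / (l ! : ℂ) *
      qpow q (z * (a + l)) / (1 - qpow q (a + l)) := fun l => by
    simp only [F, tsum_mul_left, (hasSum_qpow_add_mul hq0 hq1 (ha l) z).tsum_eq, mul_div_assoc]
  refine ⟨?_, ?_, ?_⟩
  · simpa only [hrow, norm_mul] using (summable_norm_tsum_of_summable_norm hF).mul_left _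
  · simpa only [Prod.swap_prod_mk, ← hcol] using summable_norm_tsum_of_summable_norm hF.prod_symm
  · rw [tsum_congr hrow, tsum_mul_left, ← (Summable.of_norm hF).tsum_comm, tsum_congr hcol]

theorem stmt15 (q : ℝ) (hq0 : 0 < q) (hq1 : q < 1) (ν : ℕ) (hν : 0 < ν)
    (z : ℝ) (hz : 0 < z) (s : ℂ) (hs : (ν : ℝ) + 1 < s.re) :
    Summable (fun n : ℕ => ‖qpow q (((n : ℂ) + z) * (s - (ν : ℂ))) *
      Complex.exp (-s * Real.log ((1 - q ^ ((n : ℝ) + z)) / (1 - q)))‖) ∧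
    Summable (fun l : ℕ => ‖((ascPochhammer ℂ l).eval s / (Nat.factorial l : ℂ)) *
      qpow q ((z : ℂ) * (s - (ν : ℂ) + (l : ℂ))) / (1 - qpow q (s - (ν : ℂ) + (l : ℂ)))‖) ∧
    (∑' n : ℕ, qpow q (((n : ℂ) + z) * (s - (ν : ℂ))) *
        Complex.exp (-s * Real.log ((1 - q ^ ((n : ℝ) + z)) / (1 - q)))) =
      Complex.exp (s * Real.log (1 - q)) *
        ∑' l : ℕ, ((ascPochhammer ℂ l).eval s / (Nat.factorial l : ℂ)) *
          qpow q ((z : ℂ) * (s - (ν : ℂ) + (l : ℂ))) /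
            (1 - qpow q (s - (ν : ℂ) + (l : ℂ))) :=
  stmt15_general q hq0 hq1 ν z hz s hs
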